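/- Correctness of Must and Can for emitted signals: for all Kernel Esterel programs p, p', constructive events E, E', and completion codes k, if E ⊢ p → (E', k, p') is derivable in the constructive behavioral semantics, then Must_S(p, E) ⊆ {s : s⁺ ∈ E'} ⊆ Can⁺_S(p, E), i.e., every signal in Must_S(p,E) is emitted and every emitted signal belongs to Can⁺_S(p,E). -/
import Mathlib


namespace EsterelCBS

/-- Signals are represented by natural numbers. -/
abbrev Signal := ℕ

/-- Kernel Esterel statements.  `done k` unifies `nothing` (k = 0), `pause` (k = 1)
and `exit k` (k ≥ 2).  `awaitImm pol s` waits for `s` to have the status given by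
the polarity `pol` (`awaitImm true s` is the kernel statement `await immediate s`;
the negative polarity is used in the derivative of `suspend`). -/
inductive Stmt : Type
  | done (k : ℕ)
  | emit (s : Signal)
  | awaitImm (pol : Bool) (s : Signal)
  | present (s : Signal) (p q : Stmt)
  | suspend (s : Signal) (p : Stmt)
  | seq (p q : Stmt)
  | par (p q : Stmt)
  | loop (p : Stmt)
  | trap (p : Stmt)
  | shift (p : Stmt)
  | sig (s : Signal) (p : Stmt)
  deriving DecidableEq

/-- Constructive signal statuses: present (+), absent (−), or unknown (⊥). -/
inductive CStatus : Type
  | pos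
  | neg
  | bot
  deriving DecidableEq

/-- Statuses are combined by "present dominates, unknown next". -/
def CStatus.or : CStatus → CStatus → CStatus
  | .pos, _ => .pos
  | _, .pos => .pos
  | .bot, _ => .bot
  | _, .bot => .bot
  | _, _ => .neg

/-- A constructive event is a finite map from signals to constructive statuses;
`none` means the signal is not in scope (not visible). -/
abbrev CEvent := Signal → Option CStatus

namespace CEvent

/-- The empty output event relative to `E`: every visible signal is absent. -/
def blank (E : CEvent) : CEvent := fun s => (E s).map fun _ => CStatus.neg

/-- The singleton output event emitting `s` (all other visible signals absent). -/
def single (E : CEvent) (s : Signal) : CEvent :=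
  fun t => if t = s then (E t).map fun _ => CStatus.pos
           else (E t).map fun _ => CStatus.neg

/-- Union of two output events. -/
def union (E₁ E₂ : CEvent) : CEvent := fun s =>
  match E₁ s, E₂ s with
  | some a, some b => some (a.or b)
  | some a, none => some a
  | none, o => o

/-- Update the status of a signal (possibly adding it to the domain). -/
def update (E : CEvent) (s : Signal) (v : CStatus) : CEvent :=
  fun t => if t = s then some v else E t

/-- Restriction of an output event by a local signal declaration: the binding of
the (new) signal `s` is replaced by the appropriate status − for the (old) `s`
(which is absent if the old `s` was not in scope). -/
def restrict (E' : CEvent) (s : Signal) (old : Option CStatus) : CEvent :=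
  fun t => if t = s then old.map (fun _ => CStatus.neg) else E' t

/-- The domain of an event: the set of signals in scope. -/
def dom (E : CEvent) : Set Signal := {s | E s ≠ none}

/-- A constructive event is total when no signal is mapped to ⊥. -/
def Total (E : CEvent) : Prop := ∀ s, E s ≠ some CStatus.bot

end CEvent

/-- Completion-code shift `↑` used by the `shift` statement. -/
def kup (k : ℕ) : ℕ := if 2 ≤ k then k + 1 else k

/-- Completion-code decrement `↓` used by the `trap` statement. -/
def kdown (k : ℕ) : ℕ := if k < 2 then k else if k = 2 then 0 else k - 1

/-- The δ function killing derivatives when the completion code is not 1. -/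
def delta (k : ℕ) (p : Stmt) : Stmt := if k = 1 then p else .done 0

/-- The constructive status corresponding to a polarity. -/
def polSt : Bool → CStatus
  | true => .pos
  | false => .neg

/-- Pairwise max of two sets of completion codes
(`Max K L = { max k l | k ∈ K, l ∈ L }`). -/
def codeMax (K L : Finset ℕ) : Finset ℕ := K.biUnion fun k => L.image (max k)

mutual

/-- `must p E = (Must_S(p,E), Must_K(p,E))`: the signals that must be emitted and
the completion codes that must be returned by `p` under `E` (paper Fig. 2). -/
def must : Stmt → CEvent → Finset Signal × Finset ℕ
  | .done k, _ => (∅, {k})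
  | .emit s, _ => ({s}, {0})
  | .awaitImm pol s, E =>
      if E s = some (polSt pol) then (∅, {0})
      else if E s = some (polSt (!pol)) then (∅, {1})
      else (∅, ∅)
  | .present s p q, E =>
      if E s = some .pos then must p E
      else if E s = some .neg then must q E
      else (∅, ∅)
  | .suspend _ p, E => must p E
  | .seq p q, E =>
      if 0 ∈ (must p E).2 then
        ((must p E).1 ∪ (must q E).1, (must q E).2)
      else must p E
  | .par p q, E =>
      ((must p E).1 ∪ (must q E).1, codeMax (must p E).2 (must q E).2)
  | .loop p, E => must p E
  | .trap p, E => ((must p E).1, (must p E).2.image kdown)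
  | .shift p, E => ((must p E).1, (must p E).2.image kup)
  | .sig s p, E =>
      if s ∈ (must p (E.update s .bot)).1 then
        (((must p (E.update s .pos)).1).erase s, (must p (E.update s .pos)).2)
      else if s ∉ (can true p (E.update s .bot)).1 then
        (((must p (E.update s .neg)).1).erase s, (must p (E.update s .neg)).2)
      else
        (((must p (E.update s .bot)).1).erase s, (must p (E.update s .bot)).2)

/-- `can b p E = (Can^b_S(p,E), Can^b_K(p,E))`: the signals that can be emitted
and the completion codes that can be returned by `p` under `E` (paper Fig. 2). -/
def can : Bool → Stmt → CEvent → Finset Signal × Finset ℕ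
  | _, .done k, _ => (∅, {k})
  | _, .emit s, _ => ({s}, {0})
  | _, .awaitImm pol s, E =>
      if E s = some (polSt pol) then (∅, {0})
      else if E s = some (polSt (!pol)) then (∅, {1})
      else (∅, {0, 1})
  | b, .present s p q, E =>
      if E s = some .pos then can b p E
      else if E s = some .neg then can b q E
      else ((can false p E).1 ∪ (can false q E).1,
            (can false p E).2 ∪ (can false q E).2)
  | b, .suspend _ p, E => can b p E
  | b, .seq p q, E =>
      if 0 ∉ (can b p E).2 then can b p E
      else if 0 ∈ (must p E).2 ∧ b = true then
        ((can b p E).1 ∪ (can true q E).1,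
         ((can b p E).2.erase 0) ∪ (can true q E).2)
      else
        ((can b p E).1 ∪ (can false q E).1,
         ((can b p E).2.erase 0) ∪ (can false q E).2)
  | b, .par p q, E =>
      ((can b p E).1 ∪ (can b q E).1, codeMax (can b p E).2 (can b q E).2)
  | b, .loop p, E => can b p E
  | b, .trap p, E => ((can b p E).1, (can b p E).2.image kdown)
  | b, .shift p, E => ((can b p E).1, (can b p E).2.image kup)
  | b, .sig s p, E =>
      if s ∈ (must p (E.update s .bot)).1 ∧ b = true then
        (((can b p (E.update s .pos)).1).erase s, (can b p (E.update s .pos)).2)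
      else if s ∉ (can true p (E.update s .bot)).1 then
        (((can b p (E.update s .neg)).1).erase s, (can b p (E.update s .neg)).2)
      else
        (((can b p (E.update s .bot)).1).erase s, (can b p (E.update s .bot)).2)

end

/-- The constructive behavioral semantics (CBS): `CBS E p E' k p'` means
`E ⊢ p → (E', k, p')`.  The rules are the same as for the logical behavioral
semantics except for the local signal declaration rules, which use `must`/`can`. -/
inductive CBS : CEvent → Stmt → CEvent → ℕ → Stmt → Prop
  | done {E : CEvent} {k : ℕ} :
      CBS E (.done k) E.blank k (.done 0)
  | emit {E : CEvent} {s : Signal} (h : E s ≠ none) :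
      CBS E (.emit s) (E.single s) 0 (.done 0)
  | awaitP {E : CEvent} {pol : Bool} {s : Signal}
      (h : E s = some (polSt pol)) :
      CBS E (.awaitImm pol s) E.blank 0 (.done 0)
  | awaitM {E : CEvent} {pol : Bool} {s : Signal}
      (h : E s = some (polSt (!pol))) :
      CBS E (.awaitImm pol s) E.blank 1 (.awaitImm pol s)
  | presentP {E E' : CEvent} {s : Signal} {p q p' : Stmt} {k : ℕ}
      (h : E s = some .pos) (hp : CBS E p E' k p') :
      CBS E (.present s p q) E' k p'
  | presentM {E E' : CEvent} {s : Signal} {p q q' : Stmt} {k : ℕ}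
      (h : E s = some .neg) (hq : CBS E q E' k q') :
      CBS E (.present s p q) E' k q'
  | suspend {E E' : CEvent} {s : Signal} {p p' : Stmt} {k : ℕ}
      (hp : CBS E p E' k p') :
      CBS E (.suspend s p) E' k
        (delta k (.seq (.awaitImm false s) (.suspend s p')))
  | seqK {E E' : CEvent} {p q p' : Stmt} {k : ℕ}
      (h : k ≠ 0) (hp : CBS E p E' k p') :
      CBS E (.seq p q) E' k (delta k (.seq p' q))
  | seq0 {E E₁ E₂ : CEvent} {p q p' q' : Stmt} {k : ℕ}
      (hp : CBS E p E₁ 0 p') (hq : CBS E q E₂ k q') :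
      CBS E (.seq p q) (E₁.union E₂) k q'
  | loop {E E' : CEvent} {p p' : Stmt} {k : ℕ}
      (h : k ≠ 0) (hp : CBS E p E' k p') :
      CBS E (.loop p) E' k (delta k (.seq p' (.loop p)))
  | trap {E E' : CEvent} {p p' : Stmt} {k : ℕ}
      (hp : CBS E p E' k p') :
      CBS E (.trap p) E' (kdown k) (delta k (.trap p'))
  | shift {E E' : CEvent} {p p' : Stmt} {k : ℕ}
      (hp : CBS E p E' k p') :
      CBS E (.shift p) E' (kup k) (delta k (.shift p'))
  | par {E E₁ E₂ : CEvent} {p q p' q' : Stmt} {k₁ k₂ : ℕ}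
      (hp : CBS E p E₁ k₁ p') (hq : CBS E q E₂ k₂ q') :
      CBS E (.par p q) (E₁.union E₂) (max k₁ k₂)
        (delta (max k₁ k₂) (.par p' q'))
  | sigP {E E' : CEvent} {s : Signal} {p p' : Stmt} {k : ℕ}
      (h : s ∈ (must p (E.update s .bot)).1)
      (hp : CBS (E.update s .pos) p E' k p') :
      CBS E (.sig s p) (E'.restrict s (E s)) k (delta k (.sig s p'))
  | sigM {E E' : CEvent} {s : Signal} {p p' : Stmt} {k : ℕ}
      (h : s ∉ (can true p (E.update s .bot)).1)
      (hp : CBS (E.update s .neg) p E' k p') :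
      CBS E (.sig s p) (E'.restrict s (E s)) k (delta k (.sig s p'))

end EsterelCBS

namespace EsterelCBS

/-! ### Auxiliary lemmas -/

lemma blank_ne_pos (E : CEvent) (s : Signal) : E.blank s ≠ some CStatus.pos := by
  unfold CEvent.blank; cases E s <;> simp

lemma single_pos_iff (E : CEvent) (s t : Signal) :
    E.single s t = some CStatus.pos ↔ t = s ∧ E s ≠ none := by
  unfold CEvent.single
  by_cases h : t = s
  · subst h; simp only [if_pos rfl]; cases E t <;> simp
  · simp only [if_neg h]; cases E t <;> simp [h]

lemma or_pos_iff (a b : CStatus) : a.or b = .pos ↔ a = .pos ∨ b = .pos := by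
  cases a <;> cases b <;> simp [CStatus.or]

lemma union_pos_iff (E₁ E₂ : CEvent) (s : Signal) :
    (E₁.union E₂) s = some .pos ↔ E₁ s = some .pos ∨ E₂ s = some .pos := by
  unfold CEvent.union
  cases h1 : E₁ s <;> cases h2 : E₂ s <;> simp [or_pos_iff]

lemma restrict_pos_iff (E' : CEvent) (s : Signal) (old : Option CStatus) (t : Signal) :
    (E'.restrict s old) t = some .pos ↔ t ≠ s ∧ E' t = some .pos := by
  unfold CEvent.restrict
  by_cases h : t = s
  · subst h; simp only [if_pos rfl]; cases old <;> simp
  · simp [h]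

lemma polSt_ne (pol : Bool) : polSt pol ≠ polSt (!pol) := by
  cases pol <;> simp [polSt]

lemma polSt_ne_bot (pol : Bool) : polSt pol ≠ CStatus.bot := by
  cases pol <;> simp [polSt]

lemma codeMax_mono {K K' L L' : Finset ℕ} (hK : K ⊆ K') (hL : L ⊆ L') :
    codeMax K L ⊆ codeMax K' L' := by
  intro x hx
  simp only [codeMax, Finset.mem_biUnion, Finset.mem_image] at hx ⊢
  obtain ⟨a, ha, b, hb, rfl⟩ := hx
  exact ⟨a, hK ha, b, hL hb, rfl⟩

lemma mem_codeMax {K L : Finset ℕ} {a b : ℕ} (ha : a ∈ K) (hb : b ∈ L) :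
    max a b ∈ codeMax K L := by
  simp only [codeMax, Finset.mem_biUnion, Finset.mem_image]
  exact ⟨a, ha, b, hb, rfl⟩


/-- `Must_K(p,E)` contains at most one completion code. -/
lemma mustK_eq : ∀ (p : Stmt) (E : CEvent) {k k' : ℕ},
    k ∈ (must p E).2 → k' ∈ (must p E).2 → k = k' := by
  intro p
  induction p with
  | done n => intro E k k' h h'; simp [must] at h h'; omega
  | emit s => intro E k k' h h'; simp [must] at h h'; omega
  | awaitImm pol s =>
      intro E k k' h h'
      by_cases h1 : E s = some (polSt pol)
      · simp [must, h1] at h h'; omega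
      · by_cases h2 : E s = some (polSt (!pol))
        · simp only [must, if_neg h1, if_pos h2, Finset.mem_singleton] at h h'
          omega
        · simp [must, h1, h2] at h
  | present s p q ihp ihq =>
      intro E k k' h h'
      by_cases h1 : E s = some .pos
      · simp only [must, if_pos h1] at h h'; exact ihp E h h'
      · by_cases h2 : E s = some .neg
        · simp only [must, if_neg h1, if_pos h2] at h h'; exact ihq E h h'
        · simp [must, h1, h2] at h
  | suspend s p ihp =>
      intro E k k' h h'
      simp only [must] at h h'; exact ihp E h h'
  | seq p q ihp ihq =>
      intro E k k' h h'
      by_cases h0 : 0 ∈ (must p E).2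
      · simp only [must, if_pos h0] at h h'; exact ihq E h h'
      · simp only [must, if_neg h0] at h h'; exact ihp E h h'
  | par p q ihp ihq =>
      intro E k k' h h'
      simp only [must, codeMax, Finset.mem_biUnion, Finset.mem_image] at h h'
      obtain ⟨a, ha, b, hb, rfl⟩ := h
      obtain ⟨a', ha', b', hb', rfl⟩ := h'
      rw [ihp E ha ha', ihq E hb hb']
  | loop p ihp => intro E k k' h h'; simp only [must] at h h'; exact ihp E h h'
  | trap p ihp =>
      intro E k k' h h'
      simp only [must, Finset.mem_image] at h h'
      obtain ⟨a, ha, rfl⟩ := h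
      obtain ⟨a', ha', rfl⟩ := h'
      rw [ihp E ha ha']
  | shift p ihp =>
      intro E k k' h h'
      simp only [must, Finset.mem_image] at h h'
      obtain ⟨a, ha, rfl⟩ := h
      obtain ⟨a', ha', rfl⟩ := h'
      rw [ihp E ha ha']
  | sig s p ihp =>
      intro E k k' h h'
      by_cases h1 : s ∈ (must p (E.update s .bot)).1
      · simp only [must, if_pos h1] at h h'; exact ihp _ h h'
      · by_cases h2 : s ∉ (can true p (E.update s .bot)).1
        · simp only [must, if_neg h1, if_pos h2] at h h'; exact ihp _ h h'
        · simp only [must, if_neg h1, if_neg h2] at h h'; exact ihp _ h h'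

/-- `Must(p,E) ⊆ Can⁺(p,E)` componentwise. -/
lemma must_sub_can : ∀ (p : Stmt) (E : CEvent),
    (must p E).1 ⊆ (can true p E).1 ∧ (must p E).2 ⊆ (can true p E).2 := by
  intro p
  induction p with
  | done n => intro E; simp [must, can]
  | emit s => intro E; simp [must, can]
  | awaitImm pol s =>
      intro E
      by_cases h1 : E s = some (polSt pol)
      · simp [must, can, h1]
      · by_cases h2 : E s = some (polSt (!pol)) <;> simp [must, can, h1, h2]
  | present s p q ihp ihq =>
      intro E
      by_cases h1 : E s = some .pos
      · simp only [must, can, if_pos h1]; exact ihp E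
      · by_cases h2 : E s = some .neg
        · simp only [must, can, if_neg h1, if_pos h2]; exact ihq E
        · simp [must, h1, h2]
  | suspend s p ihp => intro E; simp only [must, can]; exact ihp E
  | seq p q ihp ihq =>
      intro E
      by_cases h0 : 0 ∈ (must p E).2
      · have hc0 : 0 ∈ (can true p E).2 := (ihp E).2 h0
        rw [must, if_pos h0, can, if_neg (by simp [hc0]), if_pos ⟨h0, rfl⟩]
        constructor
        · exact Finset.union_subset_union (ihp E).1 (ihq E).1
        · exact ((ihq E).2).trans Finset.subset_union_right
      · rw [must, if_neg h0]
        by_cases hc0 : 0 ∈ (can true p E).2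
        · rw [can, if_neg (by simp [hc0]), if_neg (by simp [h0])]
          refine ⟨(ihp E).1.trans Finset.subset_union_left, fun k hk => ?_⟩
          have hk' := (ihp E).2 hk
          have hne : k ≠ 0 := fun h => h0 (h ▸ hk)
          exact Finset.mem_union_left _ (Finset.mem_erase.2 ⟨hne, hk'⟩)
        · rw [can, if_pos hc0]; exact ihp E
  | par p q ihp ihq =>
      intro E
      rw [must, can]
      exact ⟨Finset.union_subset_union (ihp E).1 (ihq E).1,
        codeMax_mono (ihp E).2 (ihq E).2⟩
  | loop p ihp => intro E; simp only [must, can]; exact ihp E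
  | trap p ihp =>
      intro E; rw [must, can]
      exact ⟨(ihp E).1, Finset.image_subset_image (ihp E).2⟩
  | shift p ihp =>
      intro E; rw [must, can]
      exact ⟨(ihp E).1, Finset.image_subset_image (ihp E).2⟩
  | sig s p ihp =>
      intro E
      by_cases h1 : s ∈ (must p (E.update s .bot)).1
      · rw [must, if_pos h1, can, if_pos ⟨h1, rfl⟩]
        exact ⟨Finset.erase_subset_erase _ (ihp _).1, (ihp _).2⟩
      · by_cases h2 : s ∉ (can true p (E.update s .bot)).1
        · rw [must, if_neg h1, if_pos h2, can,
            if_neg (by simp [h1]), if_pos h2]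
          exact ⟨Finset.erase_subset_erase _ (ihp _).1, (ihp _).2⟩
        · rw [must, if_neg h1, if_neg h2, can,
            if_neg (by simp [h1]), if_neg h2]
          exact ⟨Finset.erase_subset_erase _ (ihp _).1, (ihp _).2⟩

/-- `E ⊑ E'`: `E'` refines `E` (every ⊥ may be resolved, other statuses kept). -/
def Le (E E' : CEvent) : Prop := ∀ t, E t = E' t ∨ (E t = some .bot ∧ E' t ≠ none)

lemma Le.refl' (E : CEvent) : Le E E := fun _ => Or.inl (Eq.refl _)

lemma Le.update {E E' : CEvent} (h : Le E E') (s : Signal) (v : CStatus) :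
    Le (E.update s v) (E'.update s v) := by
  intro t; unfold CEvent.update
  by_cases ht : t = s
  · simp [ht]
  · simp only [if_neg ht]; exact h t

lemma Le.update_bot {E E' : CEvent} (h : Le E E') (s : Signal) (v : CStatus) :
    Le (E.update s .bot) (E'.update s v) := by
  intro t; unfold CEvent.update
  by_cases ht : t = s
  · simp [ht]
  · simp only [if_neg ht]; exact h t

lemma Le.eq_of_ne_bot {E E' : CEvent} (h : Le E E') {s : Signal} {v : CStatus}
    (hv : v ≠ CStatus.bot) (hs : E s = some v) : E' s = some v := by
  rcases h s with h' | ⟨h1, _⟩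
  · rw [← h', hs]
  · rw [hs] at h1
    exact absurd (Option.some_injective _ h1) hv

/-- Monotonicity of `must` and antitonicity of `can` with respect to `⊑` and the
polarity flag. -/
lemma mono : ∀ (p : Stmt) (E E' : CEvent), Le E E' → ∀ (b b' : Bool), (b' = true → b = true) →
    (((must p E).1 ⊆ (must p E').1 ∧ (must p E).2 ⊆ (must p E').2) ∧
     ((can b p E').1 ⊆ (can b' p E).1 ∧ (can b p E').2 ⊆ (can b' p E).2)) := by
  intro p
  induction p with
  | done n => intro E E' _ b b' _; simp [must, can]
  | emit s => intro E E' _ b b' _; simp [must, can]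
  | awaitImm pol s =>
      intro E E' hle b b' _
      by_cases h1 : E s = some (polSt pol)
      · have h1' := hle.eq_of_ne_bot (polSt_ne_bot pol) h1
        simp only [must, can, if_pos h1, if_pos h1']
        exact ⟨⟨subset_rfl, subset_rfl⟩, subset_rfl, subset_rfl⟩
      · by_cases h2 : E s = some (polSt (!pol))
        · have h2' := hle.eq_of_ne_bot (polSt_ne_bot _) h2
          have h1' : E' s ≠ some (polSt pol) := by
            rw [h2']; intro hh
            exact polSt_ne pol (Option.some_injective _ hh).symm
          simp only [must, can, if_neg h1, if_neg h1', if_pos h2, if_pos h2']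
          exact ⟨⟨subset_rfl, subset_rfl⟩, subset_rfl, subset_rfl⟩
        · constructor
          · simp [must, h1, h2]
          · rw [can, can, if_neg h1, if_neg h2]
            constructor
            · split_ifs <;> simp
            · split_ifs <;> intro x hx <;> simp at hx ⊢ <;> omega
  | present s p q ihp ihq =>
      intro E E' hle b b' hb
      by_cases h1 : E s = some .pos
      · have h1' := hle.eq_of_ne_bot (by simp) h1
        simp only [must, can, if_pos h1, if_pos h1']
        exact ihp E E' hle b b' hb
      · by_cases h2 : E s = some .neg
        · have h2' := hle.eq_of_ne_bot (by simp) h2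
          have h1' : E' s ≠ some .pos := by rw [h2']; simp
          simp only [must, can, if_neg h1, if_neg h1', if_pos h2, if_pos h2']
          exact ihq E E' hle b b' hb
        · constructor
          · simp [must, h1, h2]
          · rw [can, can, if_neg h1, if_neg h2]
            by_cases h1' : E' s = some .pos
            · rw [if_pos h1']
              have h := (ihp E E' hle b false (by simp)).2
              exact ⟨h.1.trans Finset.subset_union_left,
                h.2.trans Finset.subset_union_left⟩
            · rw [if_neg h1']
              by_cases h2' : E' s = some .neg
              · rw [if_pos h2']
                have h := (ihq E E' hle b false (by simp)).2
                exact ⟨h.1.trans Finset.subset_union_right,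
                  h.2.trans Finset.subset_union_right⟩
              · rw [if_neg h2']
                have hp := (ihp E E' hle false false (by simp)).2
                have hq := (ihq E E' hle false false (by simp)).2
                exact ⟨Finset.union_subset_union hp.1 hq.1,
                  Finset.union_subset_union hp.2 hq.2⟩
  | suspend s p ihp =>
      intro E E' hle b b' hb
      simp only [must, can]
      exact ihp E E' hle b b' hb
  | seq p q ihp ihq =>
      intro E E' hle b b' hb
      have hmp := (ihp E E' hle b b' hb).1
      have hcp := (ihp E E' hle b b' hb).2
      constructor
      · -- must part
        by_cases hm : 0 ∈ (must p E).2
        · have hm' : 0 ∈ (must p E').2 := hmp.2 hm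
          rw [must, if_pos hm, must, if_pos hm']
          exact ⟨Finset.union_subset_union hmp.1 ((ihq E E' hle b b' hb).1).1,
            ((ihq E E' hle b b' hb).1).2⟩
        · rw [must, if_neg hm]
          by_cases hm' : 0 ∈ (must p E').2
          · rw [must, if_pos hm']
            refine ⟨hmp.1.trans Finset.subset_union_left, fun x hx => ?_⟩
            have hx' : x ∈ (must p E').2 := hmp.2 hx
            have : x = 0 := mustK_eq p E' hx' hm'
            exact absurd (this ▸ hx) hm
          · rw [must, if_neg hm']
            exact hmp
      · -- can part
        by_cases hcE : 0 ∈ (can b' p E).2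
        · by_cases hcE' : 0 ∈ (can b p E').2
          · rw [can, if_neg (not_not.2 hcE'), can, if_neg (not_not.2 hcE)]
            by_cases hq' : 0 ∈ (must p E').2 ∧ b = true
            · rw [if_pos hq']
              by_cases hq0 : 0 ∈ (must p E).2 ∧ b' = true
              · rw [if_pos hq0]
                have hqq := (ihq E E' hle true true (fun h => h)).2
                exact ⟨Finset.union_subset_union hcp.1 hqq.1,
                  Finset.union_subset_union (Finset.erase_subset_erase _ hcp.2) hqq.2⟩
              · rw [if_neg hq0]
                have hqq := (ihq E E' hle true false (by simp)).2
                exact ⟨Finset.union_subset_union hcp.1 hqq.1,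
                  Finset.union_subset_union (Finset.erase_subset_erase _ hcp.2) hqq.2⟩
            · rw [if_neg hq']
              by_cases hq0 : 0 ∈ (must p E).2 ∧ b' = true
              · exact absurd ⟨hmp.2 hq0.1, hb hq0.2⟩ hq'
              · rw [if_neg hq0]
                have hqq := (ihq E E' hle false false (by simp)).2
                exact ⟨Finset.union_subset_union hcp.1 hqq.1,
                  Finset.union_subset_union (Finset.erase_subset_erase _ hcp.2) hqq.2⟩
          · rw [can, if_pos hcE', can, if_neg (not_not.2 hcE)]
            split_ifs with hq0 <;>
              exact ⟨hcp.1.trans Finset.subset_union_left, fun x hx =>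
                Finset.mem_union_left _
                  (Finset.mem_erase.2 ⟨fun h => hcE' (h ▸ hx), hcp.2 hx⟩)⟩
        · have hcE' : 0 ∉ (can b p E').2 := fun h => hcE (hcp.2 h)
          rw [can, if_pos hcE', can, if_pos hcE]
          exact hcp
  | par p q ihp ihq =>
      intro E E' hle b b' hb
      have hp := ihp E E' hle b b' hb
      have hq := ihq E E' hle b b' hb
      rw [must, must, can, can]
      exact ⟨⟨Finset.union_subset_union hp.1.1 hq.1.1, codeMax_mono hp.1.2 hq.1.2⟩,
        Finset.union_subset_union hp.2.1 hq.2.1, codeMax_mono hp.2.2 hq.2.2⟩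
  | loop p ihp =>
      intro E E' hle b b' hb
      simp only [must, can]
      exact ihp E E' hle b b' hb
  | trap p ihp =>
      intro E E' hle b b' hb
      have hp := ihp E E' hle b b' hb
      rw [must, must, can, can]
      exact ⟨⟨hp.1.1, Finset.image_subset_image hp.1.2⟩,
        hp.2.1, Finset.image_subset_image hp.2.2⟩
  | shift p ihp =>
      intro E E' hle b b' hb
      have hp := ihp E E' hle b b' hb
      rw [must, must, can, can]
      exact ⟨⟨hp.1.1, Finset.image_subset_image hp.1.2⟩,
        hp.2.1, Finset.image_subset_image hp.2.2⟩
  | sig s p ihp =>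
      intro E E' hle b b' hb
      have hbot : Le (E.update s .bot) (E'.update s .bot) := hle.update s .bot
      have hmustbot := (ihp _ _ hbot true true (fun h => h)).1
      have hcanbot := (ihp _ _ hbot true true (fun h => h)).2
      constructor
      · -- must part
        by_cases hA : s ∈ (must p (E.update s .bot)).1
        · have hA' : s ∈ (must p (E'.update s .bot)).1 := hmustbot.1 hA
          rw [must, if_pos hA, must, if_pos hA']
          have h := (ihp _ _ (hle.update s .pos) true true (fun h => h)).1
          exact ⟨Finset.erase_subset_erase _ h.1, h.2⟩
        · rw [must, if_neg hA]
          by_cases hB : s ∉ (can true p (E.update s .bot)).1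
          · have hA' : s ∉ (must p (E'.update s .bot)).1 := fun h =>
              hB (hcanbot.1 ((must_sub_can p _).1 h))
            have hB' : s ∉ (can true p (E'.update s .bot)).1 := fun h =>
              hB (hcanbot.1 h)
            rw [if_pos hB, must, if_neg hA', if_pos hB']
            have h := (ihp _ _ (hle.update s .neg) true true (fun h => h)).1
            exact ⟨Finset.erase_subset_erase _ h.1, h.2⟩
          · rw [if_neg hB, must]
            by_cases hA' : s ∈ (must p (E'.update s .bot)).1
            · rw [if_pos hA']
              have h := (ihp _ _ (hle.update_bot s .pos) true true (fun h => h)).1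
              exact ⟨Finset.erase_subset_erase _ h.1, h.2⟩
            · rw [if_neg hA']
              by_cases hB' : s ∉ (can true p (E'.update s .bot)).1
              · rw [if_pos hB']
                have h := (ihp _ _ (hle.update_bot s .neg) true true (fun h => h)).1
                exact ⟨Finset.erase_subset_erase _ h.1, h.2⟩
              · rw [if_neg hB']
                have h := (ihp _ _ (hle.update s .bot) true true (fun h => h)).1
                exact ⟨Finset.erase_subset_erase _ h.1, h.2⟩
      · -- can part
        rw [can, can]
        by_cases hA' : s ∈ (must p (E'.update s .bot)).1 ∧ b = true
        · rw [if_pos hA']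
          by_cases hA : s ∈ (must p (E.update s .bot)).1 ∧ b' = true
          · rw [if_pos hA]
            have h := (ihp _ _ (hle.update s .pos) b b' hb).2
            exact ⟨Finset.erase_subset_erase _ h.1, h.2⟩
          · rw [if_neg hA]
            have hnB : ¬ s ∉ (can true p (E.update s .bot)).1 := fun hB =>
              hB (hcanbot.1 ((must_sub_can p _).1 hA'.1))
            rw [if_neg hnB]
            have h := (ihp _ _ (hle.update_bot s .pos) b b' hb).2
            exact ⟨Finset.erase_subset_erase _ h.1, h.2⟩
        · rw [if_neg hA']
          by_cases hB' : s ∉ (can true p (E'.update s .bot)).1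
          · rw [if_pos hB']
            have hnA : ¬ (s ∈ (must p (E.update s .bot)).1 ∧ b' = true) := fun hA =>
              hA' ⟨hmustbot.1 hA.1, hb hA.2⟩
            rw [if_neg hnA]
            by_cases hB : s ∉ (can true p (E.update s .bot)).1
            · rw [if_pos hB]
              have h := (ihp _ _ (hle.update s .neg) b b' hb).2
              exact ⟨Finset.erase_subset_erase _ h.1, h.2⟩
            · rw [if_neg hB]
              have h := (ihp _ _ (hle.update_bot s .neg) b b' hb).2
              exact ⟨Finset.erase_subset_erase _ h.1, h.2⟩
          · rw [if_neg hB']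
            have hnA : ¬ (s ∈ (must p (E.update s .bot)).1 ∧ b' = true) := fun hA =>
              hA' ⟨hmustbot.1 hA.1, hb hA.2⟩
            have hnB : ¬ s ∉ (can true p (E.update s .bot)).1 := fun hB => by
              push_neg at hB'
              exact hB (hcanbot.1 hB')
            rw [if_neg hnA, if_neg hnB]
            have h := (ihp _ _ (hle.update s .bot) b b' hb).2
            exact ⟨Finset.erase_subset_erase _ h.1, h.2⟩

/-- Strengthened correctness statement, including completion codes. -/
lemma main_aux {E E' : CEvent} {p p' : Stmt} {k : ℕ} (h : CBS E p E' k p') :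
    (∀ s ∈ (must p E).1, E' s = some CStatus.pos) ∧
    (∀ k' ∈ (must p E).2, k' = k) ∧
    (∀ s, E' s = some CStatus.pos → s ∈ (can true p E).1) ∧
    k ∈ (can true p E).2 := by
  induction h with
  | @done E k =>
      refine ⟨by simp [must], by simp [must], fun s hs => ?_, by simp [can]⟩
      exact absurd hs (blank_ne_pos E s)
  | @emit E s h =>
      refine ⟨fun t ht => ?_, by simp [must], fun t ht => ?_, by simp [can]⟩
      · simp [must] at ht
        exact (single_pos_iff E s t).2 ⟨ht, h⟩
      · have := (single_pos_iff E s t).1 ht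
        simp [can, this.1]
  | @awaitP E pol s h =>
      refine ⟨by simp [must, h], by simp [must, h], fun t ht => ?_, by simp [can, h]⟩
      exact absurd ht (blank_ne_pos E t)
  | @awaitM E pol s h =>
      have h1 : E s ≠ some (polSt pol) := by
        rw [h]; intro hh
        exact polSt_ne pol (Option.some_injective _ hh).symm
      have h2 : polSt (!pol) ≠ polSt pol := fun hh => polSt_ne pol hh.symm
      refine ⟨by simp [must, h1, h, h2], by simp [must, h1, h, h2], fun t ht => ?_,
        by simp [can, h1, h, h2]⟩
      exact absurd ht (blank_ne_pos E t)
  | @presentP E E' s p q p' k h hp ih =>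
      simpa only [must, can, if_pos h] using ih
  | @presentM E E' s p q q' k h hq ih =>
      have h1 : E s ≠ some CStatus.pos := by rw [h]; simp
      simpa only [must, can, if_neg h1, if_pos h] using ih
  | @suspend E E' s p p' k hp ih => simpa only [must, can] using ih
  | @seqK E E' p q p' k hk hp ih =>
      obtain ⟨ih1, ih2, ih3, ih4⟩ := ih
      have hm : 0 ∉ (must p E).2 := fun h => hk (ih2 0 h).symm
      rw [must, if_neg hm, can]
      by_cases hc : 0 ∉ (can true p E).2
      · rw [if_pos hc]; exact ⟨ih1, ih2, ih3, ih4⟩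
      · rw [if_neg hc, if_neg (by simp [hm])]
        exact ⟨ih1, ih2, fun s hs => Finset.mem_union_left _ (ih3 s hs),
          Finset.mem_union_left _ (Finset.mem_erase.2 ⟨hk, ih4⟩)⟩
  | @seq0 E E₁ E₂ p q p' q' k hp hq ihp ihq =>
      obtain ⟨ihp1, ihp2, ihp3, ihp4⟩ := ihp
      obtain ⟨ihq1, ihq2, ihq3, ihq4⟩ := ihq
      rw [must, can, if_neg (not_not.2 ihp4)]
      by_cases hm : 0 ∈ (must p E).2
      · rw [if_pos hm, if_pos ⟨hm, rfl⟩]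
        refine ⟨fun s hs => ?_, ihq2, fun s hs => ?_, Finset.mem_union_right _ ihq4⟩
        · rcases Finset.mem_union.1 hs with hs | hs
          · exact (union_pos_iff E₁ E₂ s).2 (Or.inl (ihp1 s hs))
          · exact (union_pos_iff E₁ E₂ s).2 (Or.inr (ihq1 s hs))
        · rcases (union_pos_iff E₁ E₂ s).1 hs with hs | hs
          · exact Finset.mem_union_left _ (ihp3 s hs)
          · exact Finset.mem_union_right _ (ihq3 s hs)
      · rw [if_neg hm, if_neg (by simp [hm])]
        have hqmono := (mono q E E (Le.refl' E) true false (by simp)).2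
        refine ⟨fun s hs => (union_pos_iff E₁ E₂ s).2 (Or.inl (ihp1 s hs)),
          fun k' hk' => absurd ((ihp2 k' hk') ▸ hk') hm,
          fun s hs => ?_, Finset.mem_union_right _ (hqmono.2 ihq4)⟩
        rcases (union_pos_iff E₁ E₂ s).1 hs with hs | hs
        · exact Finset.mem_union_left _ (ihp3 s hs)
        · exact Finset.mem_union_right _ (hqmono.1 (ihq3 s hs))
  | @loop E E' p p' k hk hp ih => simpa only [must, can] using ih
  | @trap E E' p p' k hp ih =>
      obtain ⟨ih1, ih2, ih3, ih4⟩ := ih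
      rw [must, can]
      refine ⟨ih1, fun k' hk' => ?_, ih3, Finset.mem_image_of_mem _ ih4⟩
      obtain ⟨a, ha, rfl⟩ := Finset.mem_image.1 hk'
      rw [ih2 a ha]
  | @shift E E' p p' k hp ih =>
      obtain ⟨ih1, ih2, ih3, ih4⟩ := ih
      rw [must, can]
      refine ⟨ih1, fun k' hk' => ?_, ih3, Finset.mem_image_of_mem _ ih4⟩
      obtain ⟨a, ha, rfl⟩ := Finset.mem_image.1 hk'
      rw [ih2 a ha]
  | @par E E₁ E₂ p q p' q' k₁ k₂ hp hq ihp ihq =>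
      obtain ⟨ihp1, ihp2, ihp3, ihp4⟩ := ihp
      obtain ⟨ihq1, ihq2, ihq3, ihq4⟩ := ihq
      rw [must, can]
      refine ⟨fun s hs => ?_, fun k' hk' => ?_, fun s hs => ?_, mem_codeMax ihp4 ihq4⟩
      · rcases Finset.mem_union.1 hs with hs | hs
        · exact (union_pos_iff E₁ E₂ s).2 (Or.inl (ihp1 s hs))
        · exact (union_pos_iff E₁ E₂ s).2 (Or.inr (ihq1 s hs))
      · simp only [codeMax, Finset.mem_biUnion, Finset.mem_image] at hk'
        obtain ⟨a, ha, b, hb, rfl⟩ := hk'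
        rw [ihp2 a ha, ihq2 b hb]
      · rcases (union_pos_iff E₁ E₂ s).1 hs with hs | hs
        · exact Finset.mem_union_left _ (ihp3 s hs)
        · exact Finset.mem_union_right _ (ihq3 s hs)
  | @sigP E E' s p p' k hcond hp ih =>
      obtain ⟨ih1, ih2, ih3, ih4⟩ := ih
      rw [must, if_pos hcond, can, if_pos ⟨hcond, rfl⟩]
      refine ⟨fun t ht => ?_, ih2, fun t ht => ?_, ih4⟩
      · obtain ⟨hne, ht⟩ := Finset.mem_erase.1 ht
        exact (restrict_pos_iff E' s (E s) t).2 ⟨hne, ih1 t ht⟩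
      · obtain ⟨hne, ht⟩ := (restrict_pos_iff E' s (E s) t).1 ht
        exact Finset.mem_erase.2 ⟨hne, ih3 t ht⟩
  | @sigM E E' s p p' k hcond hp ih =>
      obtain ⟨ih1, ih2, ih3, ih4⟩ := ih
      have hA : s ∉ (must p (E.update s .bot)).1 := fun h =>
        hcond ((must_sub_can p _).1 h)
      rw [must, if_neg hA, if_pos hcond, can, if_neg (by simp [hA]), if_pos hcond]
      refine ⟨fun t ht => ?_, ih2, fun t ht => ?_, ih4⟩
      · obtain ⟨hne, ht⟩ := Finset.mem_erase.1 ht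
        exact (restrict_pos_iff E' s (E s) t).2 ⟨hne, ih1 t ht⟩
      · obtain ⟨hne, ht⟩ := (restrict_pos_iff E' s (E s) t).1 ht
        exact Finset.mem_erase.2 ⟨hne, ih3 t ht⟩

/-- **Correctness of Must and Can for emitted signals**: if
`E ⊢ p → (E', k, p')` in the CBS, then
`Must_S(p,E) ⊆ {s : s⁺ ∈ E'} ⊆ Can⁺_S(p,E)`. -/
theorem must_can_correct_signals :
    ∀ (p p' : Stmt) (E E' : CEvent) (k : ℕ),
      CBS E p E' k p' →
      (∀ s, s ∈ (must p E).1 → E' s = some CStatus.pos) ∧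
      (∀ s, E' s = some CStatus.pos → s ∈ (can true p E).1) := by
  intro p p' E E' k h
  obtain ⟨h1, _, h3, _⟩ := main_aux h
  exact ⟨h1, h3⟩

end EsterelCBS
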